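/- Let N be an integer. Let Z, W be finite symmetric sets of integers (i.e. Z = {N+1−z : z∈Z} and W = {N+1−w : w∈W}), let X¹, Y¹ be finite sets of integers with X¹∩X̄¹ = ∅, Y¹∩Ȳ¹ = ∅ and X¹∪X̄¹ = Y¹∪Ȳ¹ where X̄¹ = {N+1−x : x∈X¹} and Ȳ¹ = {N+1−y : y∈Y¹}, and let C be a finite set of integers, such that Z, W, C, X¹∪X̄¹ are pairwise disjoint. Then Δ(Z∪X¹∪W∪C)·Δ(Y¹)·Δ(Y¹,C) = Δ(Z∪Y¹∪W∪C)·Δ(X¹)·Δ(X¹,C). In particular, the ratio Δ(Z∪X¹∪W∪C)/Δ(Z∪Y¹∪W∪C) is independent of the symmetric set Z. -/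
import Mathlib


/-- `Δ(S) = ∏_{s₁,s₂ ∈ S, s₁ < s₂} (s₂ - s₁)`. -/
def Dset (S : Finset ℤ) : ℤ :=
  ∏ x ∈ S, ∏ y ∈ S.filter (fun y => x < y), (y - x)

/-- `Δ(S,T) = ∏_{s ∈ S, t ∈ T} |t - s|`. -/
def Dpair (S T : Finset ℤ) : ℤ :=
  ∏ s ∈ S, ∏ t ∈ T, |t - s|

lemma Dpair_comm (S T : Finset ℤ) : Dpair S T = Dpair T S := by
  unfold Dpair
  rw [Finset.prod_comm]
  exact Finset.prod_congr rfl fun t _ => Finset.prod_congr rfl fun s _ => by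
    rw [abs_sub_comm]

lemma Dpair_union_left {S T : Finset ℤ} (U : Finset ℤ) (h : Disjoint S T) :
    Dpair (S ∪ T) U = Dpair S U * Dpair T U := by
  unfold Dpair; exact Finset.prod_union h

lemma Dpair_nonneg (S T : Finset ℤ) : 0 ≤ Dpair S T :=
  Finset.prod_nonneg fun s _ => Finset.prod_nonneg fun t _ => abs_nonneg _

lemma Dset_union {S T : Finset ℤ} (h : Disjoint S T) :
    Dset (S ∪ T) = Dset S * Dset T * Dpair S T := by
  unfold Dset Dpair
  rw [Finset.prod_union h]
  have key : ∀ R : Finset ℤ, ∀ x : ℤ,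
      ∏ y ∈ (S ∪ T).filter (fun y => x < y), (y - x) =
        (∏ y ∈ S.filter (fun y => x < y), (y - x)) *
          ∏ y ∈ T.filter (fun y => x < y), (y - x) := by
    intro _ x
    rw [Finset.filter_union,
      Finset.prod_union (Finset.disjoint_filter_filter h)]
  simp only [key S]
  rw [Finset.prod_mul_distrib, Finset.prod_mul_distrib]
  have hswap : (∏ x ∈ T, ∏ y ∈ S.filter (fun y => x < y), (y - x)) =
      ∏ y ∈ S, ∏ x ∈ T.filter (fun x => x < y), (y - x) := by
    apply Finset.prod_comm'
    intro x y
    simp only [Finset.mem_filter]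
    tauto
  rw [hswap]
  have hcross : (∏ x ∈ S, ∏ y ∈ T.filter (fun y => x < y), (y - x)) *
      (∏ y ∈ S, ∏ x ∈ T.filter (fun x => x < y), (y - x)) =
      ∏ s ∈ S, ∏ t ∈ T, |t - s| := by
    rw [← Finset.prod_mul_distrib]
    apply Finset.prod_congr rfl
    intro s hs
    have hsT : s ∉ T := Finset.disjoint_left.mp h hs
    rw [← Finset.prod_filter_mul_prod_filter_not T (fun t => s < t)]
    congr 1
    · apply Finset.prod_congr rfl
      intro t ht
      rw [Finset.mem_filter] at ht
      rw [abs_of_pos (by omega)]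
    · apply Finset.prod_congr (by
        apply Finset.filter_congr
        intro t ht
        simp only [not_lt]
        constructor
        · intro h'; omega
        · intro h'
          have : t ≠ s := fun he => hsT (he ▸ ht)
          omega)
      intro t ht
      rw [Finset.mem_filter] at ht
      obtain ⟨h1, h2⟩ := ht
      have h3 : t ≠ s := fun he => hsT (he ▸ h1)
      rw [abs_of_neg (by omega)]
      ring
  rw [← hcross]
  ring

lemma Dset_pos (S : Finset ℤ) : 0 < Dset S := by
  unfold Dset
  apply Finset.prod_pos
  intro x _
  apply Finset.prod_pos
  intro y hy
  rw [Finset.mem_filter] at hy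
  exact sub_pos.mpr hy.2

lemma Dpair_reflect (N : ℤ) (S Z : Finset ℤ)
    (hZ : Z = Z.image (fun z => N + 1 - z)) :
    Dpair (S.image (fun x => N + 1 - x)) Z = Dpair S Z := by
  have hinj : Set.InjOn (fun x : ℤ => N + 1 - x) S := fun a _ b _ h => sub_right_injective h
  unfold Dpair
  rw [Finset.prod_image hinj]
  apply Finset.prod_congr rfl
  intro s _
  conv_rhs => rw [hZ]
  rw [Finset.prod_image (fun a _ b _ h => sub_right_injective h)]
  apply Finset.prod_congr rfl
  intro t _
  have : t - (N + 1 - s) = -(N + 1 - t - s) := by ring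
  rw [this, abs_neg]

lemma cross_eq (N : ℤ) (Z X1 Y1 X1b Y1b : Finset ℤ)
    (hZ : Z = Z.image (fun z => N + 1 - z))
    (hX1b : X1b = X1.image (fun x => N + 1 - x))
    (hY1b : Y1b = Y1.image (fun y => N + 1 - y))
    (hX : Disjoint X1 X1b) (hY : Disjoint Y1 Y1b)
    (hXY : X1 ∪ X1b = Y1 ∪ Y1b) :
    Dpair X1 Z = Dpair Y1 Z := by
  have h1 : Dpair (X1 ∪ X1b) Z = Dpair X1 Z * Dpair X1 Z := by
    rw [Dpair_union_left Z hX, hX1b, Dpair_reflect N X1 Z hZ]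
  have h2 : Dpair (Y1 ∪ Y1b) Z = Dpair Y1 Z * Dpair Y1 Z := by
    rw [Dpair_union_left Z hY, hY1b, Dpair_reflect N Y1 Z hZ]
  have h3 : Dpair X1 Z * Dpair X1 Z = Dpair Y1 Z * Dpair Y1 Z := by
    rw [← h1, ← h2, hXY]
  exact (mul_self_inj (Dpair_nonneg _ _) (Dpair_nonneg _ _)).mp h3

theorem Z_independence_symmetric (N : ℤ) (Z W X1 Y1 C : Finset ℤ)
    (hZ : Z = Z.image (fun z => N + 1 - z))
    (hW : W = W.image (fun w => N + 1 - w))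
    (X1b Y1b : Finset ℤ)
    (hX1b : X1b = X1.image (fun x => N + 1 - x))
    (hY1b : Y1b = Y1.image (fun y => N + 1 - y))
    (hX : Disjoint X1 X1b) (hY : Disjoint Y1 Y1b)
    (hXY : X1 ∪ X1b = Y1 ∪ Y1b)
    (hZW : Disjoint Z W) (hZC : Disjoint Z C) (hZX : Disjoint Z (X1 ∪ X1b))
    (hWC : Disjoint W C) (hWX : Disjoint W (X1 ∪ X1b)) (hCX : Disjoint C (X1 ∪ X1b)) :
    Dset (Z ∪ X1 ∪ W ∪ C) * (Dset Y1 * Dpair Y1 C) =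
      Dset (Z ∪ Y1 ∪ W ∪ C) * (Dset X1 * Dpair X1 C) := by
  -- Y1 and Y1b are also inside X1 ∪ X1b
  have hY1sub : Y1 ⊆ X1 ∪ X1b := hXY ▸ Finset.subset_union_left
  have hX1sub : X1 ⊆ X1 ∪ X1b := Finset.subset_union_left
  -- atomic disjointnesses
  have hZX1 : Disjoint Z X1 := hZX.mono_right hX1sub
  have hZY1 : Disjoint Z Y1 := hZX.mono_right hY1sub
  have hWX1 : Disjoint W X1 := hWX.mono_right hX1sub
  have hWY1 : Disjoint W Y1 := hWX.mono_right hY1sub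
  have hCX1 : Disjoint C X1 := hCX.mono_right hX1sub
  have hCY1 : Disjoint C Y1 := hCX.mono_right hY1sub
  -- cross-term equalities
  have hcrossZ : Dpair X1 Z = Dpair Y1 Z :=
    cross_eq N Z X1 Y1 X1b Y1b hZ hX1b hY1b hX hY hXY
  have hcrossW : Dpair X1 W = Dpair Y1 W :=
    cross_eq N W X1 Y1 X1b Y1b hW hX1b hY1b hX hY hXY
  -- expand both big Dset values
  have hdis1X : Disjoint (Z ∪ X1) W :=
    Finset.disjoint_union_left.mpr ⟨hZW, hWX1.symm⟩
  have hdis1Y : Disjoint (Z ∪ Y1) W :=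
    Finset.disjoint_union_left.mpr ⟨hZW, hWY1.symm⟩
  have hdis2X : Disjoint (Z ∪ X1 ∪ W) C :=
    Finset.disjoint_union_left.mpr
      ⟨Finset.disjoint_union_left.mpr ⟨hZC, hCX1.symm⟩, hWC⟩
  have hdis2Y : Disjoint (Z ∪ Y1 ∪ W) C :=
    Finset.disjoint_union_left.mpr
      ⟨Finset.disjoint_union_left.mpr ⟨hZC, hCY1.symm⟩, hWC⟩
  rw [Dset_union hdis2X, Dset_union hdis1X, Dset_union hZX1,
      Dset_union hdis2Y, Dset_union hdis1Y, Dset_union hZY1,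
      Dpair_union_left W hZX1, Dpair_union_left W hZY1,
      Dpair_union_left C hdis1X, Dpair_union_left C hdis1Y,
      Dpair_union_left C hZX1, Dpair_union_left C hZY1]
  rw [Dpair_comm Z X1, Dpair_comm Z Y1, hcrossZ, hcrossW]
  ring
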